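/- Let Ψ and Φ be positive semidefinite self-adjoint operators on a finite-dimensional real inner product space with ‖Φ − Ψ‖_1 ≤ Λ_2(Ψ)²/(4‖Ψ‖). Then ϰ(Φ) ≤ 2 ϰ(Ψ) and tr Φ ≤ (5/4) tr Ψ. -/

import Mathlib

/-!
Write `Δ = Φ - Ψ`, `a = ‖Ψ‖` and `δ = ‖Δ‖₁`, so that `4 a δ ≤ Λ₂(Ψ)²`. By the duality between the
operator and the nuclear norm, `tr (Δ S) ≥ -‖S‖ δ` for every symmetric `S`. Expanding
`tr Φ² = tr Ψ² + 2 tr (Δ Ψ) + tr Δ²` gives `Λ₁(Φ)² ≥ Λ₁(Ψ)² - 2 a δ ≥ Λ₁(Ψ)² / 2`.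

For `Λ₂`, take a unit eigenvector `u` of `Φ` whose eigenvalue has modulus `‖Φ‖`, and let `Q` be the
orthogonal projection onto `uᗮ`. Then `Λ₂(Φ)² = tr (QΦQ)²`, while `tr (QΨQ)² ≥ Λ₂(Ψ)²` because
`‖Ψ u‖² ≤ a ⟪u, Ψ u⟫` for `Ψ ≥ 0`. The same expansion, now of `QΦQ = QΨQ + QΔQ`, gives
`Λ₂(Φ)² ≥ Λ₂(Ψ)² / 2`, and halving both `Λ₁²` and `Λ₂²` at most doubles `ϰ = (Λ₁ Λ₂)^{-1/2}`.
Finally `tr Φ ≤ tr Ψ + δ`, and `Λ₂(Ψ)² ≤ tr Ψ² ≤ a tr Ψ` gives `δ ≤ tr Ψ / 4`.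
-/

open scoped RealInnerProductSpace

noncomputable section

namespace BWB8

variable {E : Type*} [NormedAddCommGroup E] [InnerProductSpace ℝ E] [FiniteDimensional ℝ E]

/-- Operator norm of a linear endomorphism. -/
def lmOpNorm (L : E →ₗ[ℝ] E) : ℝ := ⨆ x : {x : E // ‖x‖ ≤ 1}, ‖L x.val‖

/-- `Λ₁(L)² = Σ_k λ_k(L)² = tr(L²)` for a symmetric operator `L`. -/
def Lam1sq (L : E →ₗ[ℝ] E) : ℝ := LinearMap.trace ℝ E (L ∘ₗ L)

/-- `Λ₂(L)² = Σ_{k ≥ 2} λ_k(L)²` (eigenvalues in nonincreasing order) for a positive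
semidefinite symmetric operator `L`; indeed `Λ₂² = tr(L²) - ‖L‖²`. -/
def Lam2sq (L : E →ₗ[ℝ] E) : ℝ := LinearMap.trace ℝ E (L ∘ₗ L) - lmOpNorm L ^ 2

/-- `ϰ(L) = (Λ₁(L) Λ₂(L))^{-1/2}`. -/
def varkappa (L : E →ₗ[ℝ] E) : ℝ :=
  (Real.sqrt (Real.sqrt (Lam1sq L) * Real.sqrt (Lam2sq L)))⁻¹

/-- Nuclear (1-Schatten) norm of a symmetric operator, via the variational characterization
`‖T‖₁ = sup { tr (T ∘ C) : C symmetric, ‖C‖ ≤ 1 }`. -/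
def nucNorm (T : E →ₗ[ℝ] E) : ℝ :=
  ⨆ C : {C : E →ₗ[ℝ] E // C.IsSymmetric ∧ lmOpNorm C ≤ 1},
    LinearMap.trace ℝ E (T ∘ₗ C.val)


open LinearMap InnerProductSpace

theorem lmOpNorm_eq_norm (L : E →ₗ[ℝ] E) : lmOpNorm L = ‖L.toContinuousLinearMap‖ := by
  have hball : Metric.closedBall (0 : E) 1 = {x | ‖x‖ ≤ 1} := by ext; simp
  rw [← ContinuousLinearMap.sSup_unitClosedBall_eq_norm, hball, Set.image_eq_range]
  rfl

theorem norm_apply_le_lmOpNorm_mul (L : E →ₗ[ℝ] E) (x : E) : ‖L x‖ ≤ lmOpNorm L * ‖x‖ := by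
  rw [lmOpNorm_eq_norm]
  exact L.toContinuousLinearMap.le_opNorm x

theorem lmOpNorm_le_of_forall {L : E →ₗ[ℝ] E} {M : ℝ} (hM : 0 ≤ M)
    (h : ∀ x, ‖L x‖ ≤ M * ‖x‖) : lmOpNorm L ≤ M := by
  rw [lmOpNorm_eq_norm]
  exact ContinuousLinearMap.opNorm_le_bound _ hM h

theorem lmOpNorm_nonneg (L : E →ₗ[ℝ] E) : 0 ≤ lmOpNorm L := by
  rw [lmOpNorm_eq_norm]
  positivity

theorem lmOpNorm_neg (L : E →ₗ[ℝ] E) : lmOpNorm (-L) = lmOpNorm L := by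
  simp [lmOpNorm_eq_norm]

theorem lmOpNorm_smul (c : ℝ) (L : E →ₗ[ℝ] E) : lmOpNorm (c • L) = |c| * lmOpNorm L := by
  simp [lmOpNorm_eq_norm, norm_smul]

theorem bddAbove_range_trace_comp (T : E →ₗ[ℝ] E) :
    BddAbove (Set.range fun C : {C : E →ₗ[ℝ] E // C.IsSymmetric ∧ lmOpNorm C ≤ 1} =>
      trace ℝ E (T ∘ₗ C.val)) := by
  let f := ((trace ℝ E ∘ₗ mulLeft ℝ T ∘ₗ ContinuousLinearMap.coeLM ℝ :
    (E →L[ℝ] E) →ₗ[ℝ] ℝ)).toContinuousLinearMap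
  refine ⟨‖f‖, ?_⟩
  rintro _ ⟨⟨C, -, hC⟩, rfl⟩
  calc trace ℝ E (T ∘ₗ C) = f C.toContinuousLinearMap := rfl
    _ ≤ ‖f‖ * ‖C.toContinuousLinearMap‖ := (le_abs_self _).trans (f.le_opNorm _)
    _ ≤ ‖f‖ := by
      rw [← lmOpNorm_eq_norm]
      exact mul_le_of_le_one_right (norm_nonneg f) hC

theorem trace_comp_le_nucNorm (T : E →ₗ[ℝ] E) {C : E →ₗ[ℝ] E} (hC : C.IsSymmetric)
    (hC₁ : lmOpNorm C ≤ 1) : trace ℝ E (T ∘ₗ C) ≤ nucNorm T :=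
  le_ciSup (bddAbove_range_trace_comp T) ⟨C, hC, hC₁⟩

theorem nucNorm_nonneg (T : E →ₗ[ℝ] E) : 0 ≤ nucNorm T := by
  simpa using trace_comp_le_nucNorm T (C := 0) (fun _ _ => by simp) (by simp [lmOpNorm_eq_norm])

theorem trace_le_nucNorm (T : E →ₗ[ℝ] E) : trace ℝ E T ≤ nucNorm T :=
  trace_comp_le_nucNorm T (C := id) (fun _ _ => rfl)
    (lmOpNorm_le_of_forall zero_le_one fun x => by simp)

theorem trace_comp_le_lmOpNorm_mul_nucNorm (T : E →ₗ[ℝ] E) {S : E →ₗ[ℝ] E}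
    (hS : S.IsSymmetric) : trace ℝ E (T ∘ₗ S) ≤ lmOpNorm S * nucNorm T := by
  rcases (lmOpNorm_nonneg S).eq_or_lt with h | h
  · have : S = 0 := by
      ext x
      simpa [← h] using norm_apply_le_lmOpNorm_mul S x
    simp [this, lmOpNorm_eq_norm]
  · have key := trace_comp_le_nucNorm T (hS.smul (c := (lmOpNorm S)⁻¹) (by simp))
      (by rw [lmOpNorm_smul, abs_inv, abs_of_pos h, inv_mul_cancel₀ h.ne'])
    rw [comp_smul, map_smul, smul_eq_mul, inv_mul_le_iff₀ h] at key
    exact key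

theorem neg_lmOpNorm_mul_nucNorm_le_trace_comp (T : E →ₗ[ℝ] E) {S : E →ₗ[ℝ] E}
    (hS : S.IsSymmetric) : -(lmOpNorm S * nucNorm T) ≤ trace ℝ E (T ∘ₗ S) := by
  have := trace_comp_le_lmOpNorm_mul_nucNorm T (S := -S) fun x y => by simp [hS x y]
  rw [lmOpNorm_neg, comp_neg, map_neg] at this
  linarith

section Symmetric

variable {T : E →ₗ[ℝ] E}

theorem _root_.LinearMap.IsSymmetric.inner_eigenvectorBasis_apply (hT : T.IsSymmetric)
    (i : Fin (Module.finrank ℝ E)) (x : E) :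
    ⟪hT.eigenvectorBasis rfl i, T x⟫ = hT.eigenvalues rfl i * ⟪hT.eigenvectorBasis rfl i, x⟫ := by
  rw [← hT, hT.apply_eigenvectorBasis, RCLike.ofReal_real_eq_id, id_eq, real_inner_smul_left]

theorem _root_.LinearMap.IsSymmetric.norm_apply_sq_eq_sum (hT : T.IsSymmetric) (x : E) :
    ‖T x‖ ^ 2 = ∑ i, hT.eigenvalues rfl i ^ 2 * ⟪hT.eigenvectorBasis rfl i, x⟫ ^ 2 := by
  simp_rw [← (hT.eigenvectorBasis rfl).sum_sq_inner_right (T x), hT.inner_eigenvectorBasis_apply,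
    mul_pow]

theorem _root_.LinearMap.IsSymmetric.trace_comp_self_nonneg (hT : T.IsSymmetric) :
    0 ≤ trace ℝ E (T ∘ₗ T) := by
  simpa [hT.adjoint_eq] using (isPositive_adjoint_comp_self T).trace_nonneg

theorem exists_eigenvector_abs_eq_lmOpNorm [Nontrivial E] (hT : T.IsSymmetric) :
    ∃ u : E, ∃ ν : ℝ, ‖u‖ = 1 ∧ T u = ν • u ∧ |ν| = lmOpNorm T := by
  set v := hT.eigenvectorBasis rfl
  set μ := hT.eigenvalues rfl
  have : Nonempty (Fin (Module.finrank ℝ E)) := Fin.pos_iff_nonempty.mp Module.finrank_pos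
  obtain ⟨i₀, hi₀⟩ := Finite.exists_max fun i => |μ i|
  have hv : ‖v i₀‖ = 1 := v.orthonormal.1 i₀
  have hTv : T (v i₀) = μ i₀ • v i₀ := by exact_mod_cast hT.apply_eigenvectorBasis rfl i₀
  refine ⟨v i₀, μ i₀, hv, hTv, le_antisymm ?_ ?_⟩
  · simpa [hTv, norm_smul, hv] using norm_apply_le_lmOpNorm_mul T (v i₀)
  · refine lmOpNorm_le_of_forall (abs_nonneg _) fun x => ?_
    refine (pow_le_pow_iff_left₀ (norm_nonneg _) (by positivity) two_ne_zero).mp ?_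
    calc ‖T x‖ ^ 2 = ∑ i, μ i ^ 2 * ⟪v i, x⟫ ^ 2 := hT.norm_apply_sq_eq_sum x
      _ ≤ ∑ i, μ i₀ ^ 2 * ⟪v i, x⟫ ^ 2 := by
        refine Finset.sum_le_sum fun i _ => mul_le_mul_of_nonneg_right ?_ (sq_nonneg _)
        exact sq_le_sq.mpr (hi₀ i)
      _ = (|μ i₀| * ‖x‖) ^ 2 := by
        rw [← Finset.mul_sum, v.sum_sq_inner_right, mul_pow, sq_abs]

end Symmetric

section Positive

variable {T : E →ₗ[ℝ] E}

theorem norm_apply_sq_le_lmOpNorm_mul_inner (hT : T.IsPositive) (x : E) :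
    ‖T x‖ ^ 2 ≤ lmOpNorm T * ⟪x, T x⟫ := by
  set v := hT.isSymmetric.eigenvectorBasis rfl
  set μ := hT.isSymmetric.eigenvalues rfl
  have hμ : ∀ i, μ i ^ 2 ≤ lmOpNorm T * μ i := fun i => by
    have hTv : T (v i) = μ i • v i := by exact_mod_cast hT.isSymmetric.apply_eigenvectorBasis rfl i
    have hμa : |μ i| ≤ lmOpNorm T := by
      simpa [hTv, norm_smul, v.orthonormal.1 i] using norm_apply_le_lmOpNorm_mul T (v i)
    have hμ0 : 0 ≤ μ i := hT.nonneg_eigenvalues rfl i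
    rw [abs_of_nonneg hμ0] at hμa
    nlinarith
  have hinner : ⟪x, T x⟫ = ∑ i, μ i * ⟪v i, x⟫ ^ 2 := by
    rw [← v.sum_inner_mul_inner x (T x)]
    refine Finset.sum_congr rfl fun i _ => ?_
    rw [hT.isSymmetric.inner_eigenvectorBasis_apply, real_inner_comm x]
    ring
  rw [hT.isSymmetric.norm_apply_sq_eq_sum, hinner, Finset.mul_sum]
  refine Finset.sum_le_sum fun i _ => ?_
  rw [← mul_assoc]
  exact mul_le_mul_of_nonneg_right (hμ i) (sq_nonneg _)

theorem trace_comp_self_le_lmOpNorm_mul_trace (hT : T.IsPositive) :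
    trace ℝ E (T ∘ₗ T) ≤ lmOpNorm T * trace ℝ E T := by
  set b := stdOrthonormalBasis ℝ E
  rw [trace_eq_sum_inner _ b, trace_eq_sum_inner _ b, Finset.mul_sum]
  refine Finset.sum_le_sum fun i _ => ?_
  rw [comp_apply, ← hT.isSymmetric, real_inner_self_eq_norm_sq]
  exact norm_apply_sq_le_lmOpNorm_mul_inner hT (b i)

end Positive

section InnerProductSpace

variable {F : Type*} [NormedAddCommGroup F] [InnerProductSpace ℝ F]

def projOrthogonal (u : F) : F →ₗ[ℝ] F := LinearMap.id - (rankOne ℝ u u : F →ₗ[ℝ] F)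

theorem isSymmetricProjection_projOrthogonal {u : F} (hu : ‖u‖ = 1) :
    (projOrthogonal u).IsSymmetricProjection :=
  have hP := isSymmetricProjection_rankOne_self (𝕜 := ℝ) hu
  ⟨hP.isIdempotentElem.one_sub, IsSymmetric.id.sub hP.isSymmetric⟩

theorem _root_.LinearMap.IsSymmetricProjection.norm_apply_le {Q : F →ₗ[ℝ] F}
    (hQ : Q.IsSymmetricProjection) (x : F) : ‖Q x‖ ≤ ‖x‖ := by
  have h : ‖Q x‖ ^ 2 ≤ ‖x‖ * ‖Q x‖ :=
    calc ‖Q x‖ ^ 2 = ⟪x, Q x⟫ := by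
          rw [← real_inner_self_eq_norm_sq, hQ.isSymmetric, ← Module.End.mul_apply,
            hQ.isIdempotentElem.eq]
      _ ≤ ‖x‖ * ‖Q x‖ := real_inner_le_norm _ _
  nlinarith [norm_nonneg (Q x), norm_nonneg x]

theorem lam2sq_le_lam1sq (T : F →ₗ[ℝ] F) : Lam2sq T ≤ Lam1sq T :=
  sub_le_self _ (sq_nonneg _)

end InnerProductSpace

section Compression

variable {Q : E →ₗ[ℝ] E}

theorem lmOpNorm_conj_le (hQ : Q.IsSymmetricProjection) (A : E →ₗ[ℝ] E) :
    lmOpNorm (Q ∘ₗ A ∘ₗ Q) ≤ lmOpNorm A :=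
  lmOpNorm_le_of_forall (lmOpNorm_nonneg A) fun x =>
    calc ‖Q (A (Q x))‖ ≤ ‖A (Q x)‖ := hQ.norm_apply_le _
      _ ≤ lmOpNorm A * ‖Q x‖ := norm_apply_le_lmOpNorm_mul A _
      _ ≤ lmOpNorm A * ‖x‖ := by gcongr; exacts [lmOpNorm_nonneg A, hQ.norm_apply_le x]

theorem _root_.LinearMap.IsSymmetric.conj {A : E →ₗ[ℝ] E} (hA : A.IsSymmetric)
    (hQ : Q.IsSymmetric) : (Q ∘ₗ A ∘ₗ Q).IsSymmetric := by
  simpa [hQ.adjoint_eq] using hA.conj_adjoint Q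

theorem trace_conj_comp_conj (hQ : IsIdempotentElem Q) (A B : E →ₗ[ℝ] E) :
    trace ℝ E ((Q ∘ₗ A ∘ₗ Q) ∘ₗ Q ∘ₗ B ∘ₗ Q) = trace ℝ E (B ∘ₗ Q ∘ₗ A ∘ₗ Q) := by
  have hQQ (x : E) : Q (Q x) = Q x := congr($hQ.eq x)
  calc trace ℝ E ((Q ∘ₗ A ∘ₗ Q) ∘ₗ Q ∘ₗ B ∘ₗ Q)
      = trace ℝ E (((Q ∘ₗ A ∘ₗ Q) ∘ₗ B) ∘ₗ Q) := by congr 1; ext x; simp [hQQ]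
    _ = trace ℝ E (Q ∘ₗ (Q ∘ₗ A ∘ₗ Q) ∘ₗ B) := trace_comp_comm' _ _
    _ = trace ℝ E ((Q ∘ₗ A ∘ₗ Q) ∘ₗ B) := by congr 1; ext x; simp [hQQ]
    _ = trace ℝ E (B ∘ₗ Q ∘ₗ A ∘ₗ Q) := trace_comp_comm' _ _

theorem le_lam1sq_add (S : E →ₗ[ℝ] E) {T : E →ₗ[ℝ] E} (hT : T.IsSymmetric) :
    Lam1sq S + 2 * trace ℝ E (S ∘ₗ T) ≤ Lam1sq (S + T) := by
  have := hT.trace_comp_self_nonneg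
  rw [Lam1sq, Lam1sq, add_comp, comp_add, comp_add, map_add, map_add, map_add, trace_comp_comm' T S]
  linarith

end Compression

section RankOne

theorem trace_comp_rankOne_self (A : E →ₗ[ℝ] E) (u : E) :
    trace ℝ E (A ∘ₗ (rankOne ℝ u u : E →ₗ[ℝ] E)) = ⟪u, A u⟫ := by
  have : A ∘ₗ (rankOne ℝ u u : E →ₗ[ℝ] E) = (rankOne ℝ (A u) u : E →ₗ[ℝ] E) := by
    ext x; simp
  rw [this, trace_rankOne]

theorem lam1sq_conj_projOrthogonal {u : E} (hu : ‖u‖ = 1) (A : E →ₗ[ℝ] E) :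
    Lam1sq (projOrthogonal u ∘ₗ A ∘ₗ projOrthogonal u)
      = Lam1sq A - 2 * ⟪u, A (A u)⟫ + ⟪u, A u⟫ ^ 2 := by
  set P : E →ₗ[ℝ] E := (rankOne ℝ u u : E →ₗ[ℝ] E)
  have hexpand : A ∘ₗ projOrthogonal u ∘ₗ A ∘ₗ projOrthogonal u
      = A ∘ₗ A - (A ∘ₗ A) ∘ₗ P - A ∘ₗ P ∘ₗ A + A ∘ₗ P ∘ₗ A ∘ₗ P := by
    simp only [projOrthogonal, ← Module.End.mul_eq_comp, ← Module.End.one_eq_id]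
    noncomm_ring
  have hAPA : trace ℝ E (A ∘ₗ P ∘ₗ A) = trace ℝ E ((A ∘ₗ A) ∘ₗ P) := by
    rw [← comp_assoc, trace_comp_comm', comp_assoc]
  have hPAP : P ∘ₗ A ∘ₗ P = ⟪u, A u⟫ • P := by
    ext x; simp [P, smul_smul, mul_comm]
  rw [Lam1sq, Lam1sq,
    trace_conj_comp_conj (isSymmetricProjection_projOrthogonal hu).isIdempotentElem, hexpand, hPAP,
    map_add, map_sub, map_sub, hAPA, comp_smul, map_smul, trace_comp_rankOne_self,
    trace_comp_rankOne_self, smul_eq_mul, comp_apply]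
  ring

end RankOne

section Lambda

theorem lam2sq_zero : Lam2sq (0 : E →ₗ[ℝ] E) = 0 := by
  simp [Lam2sq, lmOpNorm_eq_norm]

theorem lmOpNorm_pos_of_lam2sq_pos {T : E →ₗ[ℝ] E} (h : 0 < Lam2sq T) : 0 < lmOpNorm T := by
  refine (lmOpNorm_nonneg T).lt_of_ne fun h0 => h.ne' ?_
  have : T = 0 := by
    ext x
    simpa [← h0] using norm_apply_le_lmOpNorm_mul T x
  rw [this, lam2sq_zero]

theorem nontrivial_of_lam2sq_pos {T : E →ₗ[ℝ] E} (h : 0 < Lam2sq T) : Nontrivial E := by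
  by_contra hE
  rw [not_nontrivial_iff_subsingleton] at hE
  rw [Subsingleton.elim T 0, lam2sq_zero] at h
  exact h.false

theorem lam2sq_eq_lam1sq_conj_projOrthogonal {T : E →ₗ[ℝ] E} {u : E} (hu : ‖u‖ = 1) {ν : ℝ}
    (hTu : T u = ν • u) (hν : |ν| = lmOpNorm T) :
    Lam2sq T = Lam1sq (projOrthogonal u ∘ₗ T ∘ₗ projOrthogonal u) := by
  rw [lam1sq_conj_projOrthogonal hu, Lam2sq, Lam1sq, ← hν, sq_abs, hTu, map_smul, hTu, smul_smul,
    real_inner_smul_right, real_inner_smul_right, real_inner_self_eq_norm_sq, hu]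
  ring

theorem lam2sq_le_lam1sq_conj_projOrthogonal {T : E →ₗ[ℝ] E} (hT : T.IsPositive) {u : E}
    (hu : ‖u‖ = 1) : Lam2sq T ≤ Lam1sq (projOrthogonal u ∘ₗ T ∘ₗ projOrthogonal u) := by
  have h := norm_apply_sq_le_lmOpNorm_mul_inner hT u
  rw [lam1sq_conj_projOrthogonal hu, Lam2sq, Lam1sq, ← hT.isSymmetric, real_inner_self_eq_norm_sq]
  nlinarith [sq_nonneg (lmOpNorm T - ⟪u, T u⟫)]

end Lambda

section Perturbation

variable {Ψ Φ : E →ₗ[ℝ] E}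

theorem trace_le_five_fourths_mul_trace (hΨ : Ψ.IsPositive) (ha : 0 < lmOpNorm Ψ)
    (h : 4 * (lmOpNorm Ψ * nucNorm (Φ - Ψ)) ≤ Lam2sq Ψ) :
    trace ℝ E Φ ≤ 5 / 4 * trace ℝ E Ψ := by
  have hΔ := trace_le_nucNorm (Φ - Ψ)
  have hsq := trace_comp_self_le_lmOpNorm_mul_trace hΨ
  have hδ : 4 * nucNorm (Φ - Ψ) ≤ trace ℝ E Ψ := by
    refine le_of_mul_le_mul_left ?_ ha
    unfold Lam2sq at h
    nlinarith [sq_nonneg (lmOpNorm Ψ)]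
  rw [map_sub] at hΔ
  linarith

theorem half_lam1sq_le_lam1sq (hΨ : Ψ.IsSymmetric) (hΦ : Φ.IsSymmetric)
    (h : 4 * (lmOpNorm Ψ * nucNorm (Φ - Ψ)) ≤ Lam2sq Ψ) : Lam1sq Ψ / 2 ≤ Lam1sq Φ := by
  have hcross := neg_lmOpNorm_mul_nucNorm_le_trace_comp (Φ - Ψ) hΨ
  have hsum := le_lam1sq_add Ψ (hΦ.sub hΨ)
  rw [add_sub_cancel, trace_comp_comm'] at hsum
  linarith [lam2sq_le_lam1sq Ψ]

theorem half_lam2sq_le_lam2sq [Nontrivial E] (hΨ : Ψ.IsPositive) (hΦ : Φ.IsSymmetric)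
    (h : 4 * (lmOpNorm Ψ * nucNorm (Φ - Ψ)) ≤ Lam2sq Ψ) : Lam2sq Ψ / 2 ≤ Lam2sq Φ := by
  obtain ⟨u, ν, hu, hΦu, hν⟩ := exists_eigenvector_abs_eq_lmOpNorm hΦ
  set Q := projOrthogonal u
  have hQ := isSymmetricProjection_projOrthogonal hu
  have hsplit : Q ∘ₗ Φ ∘ₗ Q = Q ∘ₗ Ψ ∘ₗ Q + Q ∘ₗ (Φ - Ψ) ∘ₗ Q := by
    rw [sub_comp, comp_sub, add_sub_cancel]
  have hcross : -(lmOpNorm Ψ * nucNorm (Φ - Ψ))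
      ≤ trace ℝ E ((Q ∘ₗ Ψ ∘ₗ Q) ∘ₗ Q ∘ₗ (Φ - Ψ) ∘ₗ Q) := by
    rw [trace_conj_comp_conj hQ.isIdempotentElem]
    calc -(lmOpNorm Ψ * nucNorm (Φ - Ψ)) ≤ -(lmOpNorm (Q ∘ₗ Ψ ∘ₗ Q) * nucNorm (Φ - Ψ)) := by
          gcongr
          exacts [nucNorm_nonneg _, lmOpNorm_conj_le hQ Ψ]
      _ ≤ _ := neg_lmOpNorm_mul_nucNorm_le_trace_comp _ (hΨ.isSymmetric.conj hQ.isSymmetric)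
  have hsum := le_lam1sq_add (Q ∘ₗ Ψ ∘ₗ Q) ((hΦ.sub hΨ.isSymmetric).conj hQ.isSymmetric)
  rw [← hsplit, ← lam2sq_eq_lam1sq_conj_projOrthogonal hu hΦu hν] at hsum
  linarith [lam2sq_le_lam1sq_conj_projOrthogonal hΨ hu]

end Perturbation

section Varkappa

variable {F : Type*} [NormedAddCommGroup F] [InnerProductSpace ℝ F]

theorem half_sqrt_le_sqrt {x y : ℝ} (h : x / 4 ≤ y) : √x / 2 ≤ √y :=
  calc √x / 2 = √(x / 4) := by
        rw [Real.sqrt_div' _ (by norm_num), show (4 : ℝ) = 2 ^ 2 by norm_num,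
          Real.sqrt_sq (by norm_num)]
    _ ≤ √y := Real.sqrt_le_sqrt h

theorem varkappa_le_two_mul {Ψ Φ : F →ₗ[ℝ] F} (hΨ : 0 < Lam2sq Ψ)
    (h₁ : Lam1sq Ψ / 2 ≤ Lam1sq Φ) (h₂ : Lam2sq Ψ / 2 ≤ Lam2sq Φ) :
    varkappa Φ ≤ 2 * varkappa Ψ := by
  have hΨ₁ : 0 < Lam1sq Ψ := hΨ.trans_le (lam2sq_le_lam1sq Ψ)
  have hpq : √(Lam1sq Ψ) * √(Lam2sq Ψ) / 4 ≤ √(Lam1sq Φ) * √(Lam2sq Φ) :=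
    calc √(Lam1sq Ψ) * √(Lam2sq Ψ) / 4 = (√(Lam1sq Ψ) / 2) * (√(Lam2sq Ψ) / 2) := by ring
      _ ≤ √(Lam1sq Φ) * √(Lam2sq Φ) := by
        gcongr <;> apply half_sqrt_le_sqrt <;> linarith
  calc varkappa Φ ≤ (√(√(Lam1sq Ψ) * √(Lam2sq Ψ)) / 2)⁻¹ :=
        inv_anti₀ (by positivity) (half_sqrt_le_sqrt hpq)
    _ = 2 * varkappa Ψ := by rw [varkappa, inv_div, div_eq_mul_inv]

end Varkappa

theorem statement8_general (Ψ Φ : E →ₗ[ℝ] E)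
    (hΨsym : Ψ.IsSymmetric) (hΦsym : Φ.IsSymmetric)
    (hΨpos : ∀ x : E, 0 ≤ ⟪x, Ψ x⟫)
    (hΛ₂ : 0 < Lam2sq Ψ)
    (hnuc : nucNorm (Φ - Ψ) ≤ Lam2sq Ψ / (4 * lmOpNorm Ψ)) :
    varkappa Φ ≤ 2 * varkappa Ψ ∧
      LinearMap.trace ℝ E Φ ≤ (5 / 4) * LinearMap.trace ℝ E Ψ := by
  have hΨ : Ψ.IsPositive := ⟨hΨsym, fun x => by simpa [real_inner_comm] using hΨpos x⟩
  have ha := lmOpNorm_pos_of_lam2sq_pos hΛ₂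
  have := nontrivial_of_lam2sq_pos hΛ₂
  have h : 4 * (lmOpNorm Ψ * nucNorm (Φ - Ψ)) ≤ Lam2sq Ψ := by
    rw [le_div_iff₀ (by positivity)] at hnuc
    linarith
  exact ⟨varkappa_le_two_mul hΛ₂ (half_lam1sq_le_lam1sq hΨsym hΦsym h)
    (half_lam2sq_le_lam2sq hΨ hΦsym h), trace_le_five_fourths_mul_trace hΨ ha h⟩

theorem statement8 (Ψ Φ : E →ₗ[ℝ] E)
    (hΨsym : Ψ.IsSymmetric) (hΦsym : Φ.IsSymmetric)
    (hΨpos : ∀ x : E, 0 ≤ ⟪x, Ψ x⟫) (hΦpos : ∀ x : E, 0 ≤ ⟪x, Φ x⟫)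
    (hΛ₂ : 0 < Lam2sq Ψ)
    (hnuc : nucNorm (Φ - Ψ) ≤ Lam2sq Ψ / (4 * lmOpNorm Ψ)) :
    varkappa Φ ≤ 2 * varkappa Ψ ∧
      LinearMap.trace ℝ E Φ ≤ (5 / 4) * LinearMap.trace ℝ E Ψ :=
  statement8_general Ψ Φ hΨsym hΦsym hΨpos hΛ₂ hnuc

end BWB8
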